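/- arXiv:2205.02722 — 5 statements merged into one kernel-verified Lean document; each statement's English description precedes it below -/
import Mathlib

section
/- The generating function identity B_k(x) = 1 + x·B_k(x)^k holds for the formal power series B_k whose n-th coefficient is the Fuss–Catalan number FC_n(k,1) = (1/(nk+1))·C(nk+1, n). That is, the formal power series ∑_n FC_n(k,1) xⁿ satisfies B = 1 + x·B^k. -/
/-!
Let `F p` be the generating function of the Raney numbers `p/(nk+p) · C(nk+p, n)`, so that
`F 1 = B_k`. A Pascal-type identity for binomial coefficients gives `F 0 = 1` and
`F (p+1) = F p + X * F (p+k)`. A family satisfying this recurrence is determined by `F 0`,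
since the coefficients of `F p` are then fixed by induction on the degree and then on `p`.
Hence `p ↦ F p * F 1 - F (p+1)`, which satisfies the recurrence and vanishes at `0`, is zero,
so `F p = B_k ^ p`, and the recurrence at `p = 0` reads `B_k = 1 + X * B_k ^ k`.
-/

open PowerSeries

/-- The Fuss–Catalan generating function `∑ₙ FC_n(k,1) xⁿ` with
`FC_n(k,1) = (1/(nk+1))·binomial(nk+1, n)`. -/
noncomputable def fussCatalanGF (k : ℕ) : PowerSeries ℚ :=
  PowerSeries.mk fun n => ((n * k + 1).choose n : ℚ) / (n * k + 1)

section RaneyRecurrence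

variable {R : Type*} [CommRing R]

def RaneyRecurrence (k : ℕ) (F : ℕ → R⟦X⟧) : Prop :=
  ∀ p, F (p + 1) = F p + X * F (p + k)

theorem RaneyRecurrence.eq_zero {k : ℕ} {F : ℕ → R⟦X⟧} (hF : RaneyRecurrence k F)
    (h0 : F 0 = 0) : F = 0 := by
  suffices h : ∀ n p, coeff n (F p) = 0 by
    funext p
    ext n
    simpa using h n p
  intro n
  induction n with
  | zero =>
    intro p
    induction p with
    | zero => simp [h0]
    | succ p ih => simpa [hF p] using ih
  | succ n ihn =>
    intro p
    induction p with
    | zero => simp [h0]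
    | succ p ih => simp [hF p, ih, ihn]

theorem RaneyRecurrence.eq_pow {k : ℕ} {F : ℕ → R⟦X⟧} (hF : RaneyRecurrence k F)
    (h0 : F 0 = 1) (p : ℕ) : F p = F 1 ^ p := by
  have habsorb : (fun p => F p * F 1 - F (p + 1)) = 0 := by
    refine RaneyRecurrence.eq_zero (k := k) (fun p => ?_) (by simp [h0])
    simp only [hF p, hF (p + 1), Nat.add_right_comm p 1 k]
    ring
  induction p with
  | zero => simp [h0]
  | succ p ih =>
    rw [pow_succ, ← ih, eq_comm, ← sub_eq_zero]
    exact congrFun habsorb p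

end RaneyRecurrence

/-- The `if` replaces the junk value `0 / 0` at `n = p = 0` by the constant coefficient `1` of
`B_k ^ 0`. -/
noncomputable def raney (k n p : ℕ) : ℚ :=
  if n = 0 then 1 else p * ((n * k + p).choose n : ℚ) / (n * k + p)

theorem raney_eq_of_ne_zero {k n p : ℕ} (h : n * k + p ≠ 0) :
    raney k n p = p * ((n * k + p).choose n : ℚ) / (n * k + p) := by
  rcases n with _ | n
  · have hp : (p : ℚ) ≠ 0 := by simpa using h
    simp [raney, hp]
  · exact if_neg n.succ_ne_zero

theorem raney_succ_add_one (k n p : ℕ) :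
    raney k (n + 1) (p + 1) = raney k (n + 1) p + raney k n (p + k) := by
  rcases Nat.eq_zero_or_pos ((n + 1) * k + p) with hm0 | hm0
  · obtain ⟨rfl, rfl⟩ : k = 0 ∧ p = 0 := by simpa using hm0
    rcases n with _ | n <;> simp [raney, Nat.choose_eq_zero_of_lt]
  set m := (n + 1) * k + p with hm
  have hshift : n * k + (p + k) = m := by rw [hm]; ring
  rw [raney_eq_of_ne_zero (by omega), raney_eq_of_ne_zero (by omega),
    raney_eq_of_ne_zero (by omega), ← hm, hshift, show (n + 1) * k + (p + 1) = m + 1 by omega]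
  have habsorb : (m + 1 : ℚ) * m.choose n = (m + 1).choose (n + 1) * (n + 1) := by
    exact_mod_cast Nat.add_one_mul_choose_eq m n
  have hpascal : ((m + 1).choose (n + 1) : ℚ) = m.choose n + m.choose (n + 1) := by
    exact_mod_cast Nat.choose_succ_succ' m n
  have hmq : (m : ℚ) = (n + 1) * k + p := by simp [hm]
  have hm0' : (m : ℚ) ≠ 0 := by positivity
  push_cast
  rw [← hmq, show (n : ℚ) * k + (p + k) = m by rw [hmq]; ring,
    show ((n : ℚ) + 1) * k + (p + 1) = m + 1 by rw [hmq]; ring]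
  field_simp
  linear_combination ((m + 1 : ℚ) * p) * hpascal - (k : ℚ) * habsorb
    + ((m + 1).choose (n + 1) : ℚ) * hmq

noncomputable def raneyGF (k p : ℕ) : ℚ⟦X⟧ :=
  mk (raney k · p)

theorem raneyRecurrence_raneyGF (k : ℕ) : RaneyRecurrence k (raneyGF k) := by
  intro p
  ext n
  rcases n with _ | n
  · simp [raneyGF, raney]
  · simp [raneyGF, raney_succ_add_one]

theorem raneyGF_zero (k : ℕ) : raneyGF k 0 = 1 := by
  ext n
  rcases n with _ | n <;> simp [raneyGF, raney, coeff_one]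

theorem raneyGF_one (k : ℕ) : raneyGF k 1 = fussCatalanGF k := by
  ext n
  rcases n with _ | n <;> simp [raneyGF, fussCatalanGF, raney]

theorem stmt_8_general (k : ℕ) :
    fussCatalanGF k = 1 + PowerSeries.X * (fussCatalanGF k) ^ k := by
  have hpow := (raneyRecurrence_raneyGF k).eq_pow (raneyGF_zero k) k
  have hstep := raneyRecurrence_raneyGF k 0
  rwa [zero_add, zero_add, raneyGF_zero, hpow, raneyGF_one] at hstep

theorem stmt_8 (k : ℕ) (hk : 1 ≤ k) :
    fussCatalanGF k = 1 + PowerSeries.X * (fussCatalanGF k) ^ k :=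
  stmt_8_general k
end

section
/- (Lagrange inversion, coefficient form) Let f be a formal power series over a field of characteristic zero with f(0) = 0 and f'(0) ≠ 0, and let h(x) = x/f(x). Let g be the compositional inverse of f. Then for every r ≥ 0, the coefficient of x^{r+1} in g equals (1/(r+1)) times the coefficient of x^r in h(x)^{r+1}. -/
open PowerSeries

/-- Composition `g ∘ f` of formal power series over a field `K`,
valid when `f` has zero constant term. -/
noncomputable def psComp {K : Type*} [Field K] (g f : PowerSeries K) : PowerSeries K :=
  PowerSeries.mk fun n => ∑ k ∈ Finset.range (n + 1), (coeff k g) * coeff n (f ^ k)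

private lemma coeff_pow_eq_zero' {K : Type*} [Field K] {f : PowerSeries K}
    (hf0 : constantCoeff f = 0) {n k : ℕ} (hnk : n < k) :
    coeff n (f ^ k) = 0 := by
  have hdvd : (X : PowerSeries K) ^ k ∣ f ^ k :=
    pow_dvd_pow_of_dvd (X_dvd_iff.mpr hf0) k
  exact (X_pow_dvd_iff.mp hdvd) n hnk

/-- The key "residue" lemma: for `m ≥ 1`, the coefficient of `x^m` in
`h^(m+1) * f'` vanishes, where `h * f = X`. -/
private lemma residue_lemma' {K : Type*} [Field K] [CharZero K] {f h : PowerSeries K}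
    (hh : h * f = X) {m : ℕ} (hm : 1 ≤ m) :
    coeff m (h ^ (m + 1) * derivative K f) = 0 := by
  have hdiff : h * derivative K f + f * derivative K h = 1 := by
    have := congrArg (derivative K) hh
    rw [Derivation.leibniz, derivative_X] at this
    simpa [smul_eq_mul] using this
  have key : h ^ (m + 1) * derivative K f
      = h ^ m - X * (h ^ (m - 1) * derivative K h) := by
    have h1 : h ^ (m + 1) * derivative K f = h ^ m * (h * derivative K f) := by ring
    have h2 : h * derivative K f = 1 - f * derivative K h := by
      linear_combination hdiff
    have h3 : h ^ m = h * h ^ (m - 1) := by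
      rw [← pow_succ']
      congr 1
      omega
    rw [h1, h2, h3, ← hh]
    ring
  have hder : coeff (m - 1) (derivative K (h ^ m))
      = (m : K) * coeff (m - 1) (h ^ (m - 1) * derivative K h) := by
    rw [Derivation.leibniz_pow, smul_eq_mul, map_nsmul, nsmul_eq_mul]
  have hder2 : coeff (m - 1) (derivative K (h ^ m)) = (m : K) * coeff m (h ^ m) := by
    rw [coeff_derivative]
    have hm1 : m - 1 + 1 = m := Nat.succ_pred_eq_of_pos hm
    rw [hm1, Nat.cast_sub hm]
    push_cast
    ring
  have hmK : (m : K) ≠ 0 := Nat.cast_ne_zero.mpr (by omega)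
  have heq : coeff (m - 1) (h ^ (m - 1) * derivative K h) = coeff m (h ^ m) :=
    mul_left_cancel₀ hmK (hder.symm.trans hder2)
  rw [key, map_sub]
  have hxm : coeff m (X * (h ^ (m - 1) * derivative K h))
      = coeff (m - 1) (h ^ (m - 1) * derivative K h) := by
    rw [← pow_one (X : PowerSeries K), coeff_X_pow_mul', if_pos hm]
  rw [hxm, heq, sub_self]

/-- Lagrange inversion, coefficient form. -/
theorem stmt_11 {K : Type*} [Field K] [CharZero K] (f g h : PowerSeries K)
    (hf0 : constantCoeff f = 0) (hf1 : coeff 1 f ≠ 0)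
    (hh : h * f = PowerSeries.X)
    (hg : psComp g f = PowerSeries.X) (r : ℕ) :
    coeff (r + 1) g = (1 / (r + 1 : K)) * coeff r (h ^ (r + 1)) := by
  have hgc : ∀ n : ℕ, ∑ k ∈ Finset.range (n + 1),
      coeff k g * coeff n (f ^ k) = coeff n (X : PowerSeries K) := by
    intro n
    have := congrArg (coeff n) hg
    rwa [psComp, coeff_mk] at this
  set n := r + 1 with hn
  set S : PowerSeries K := ∑ j ∈ Finset.range n,
      C ((j + 1 : K) * coeff (j + 1) g) * (f ^ j * derivative K f) with hS
  -- Step A : coeff m S = δ_{m,0} for m < n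
  have stepA : ∀ m : ℕ, m < n → coeff m S = if m = 0 then 1 else 0 := by
    intro m hm
    have hterm : ∀ j : ℕ, coeff m (C ((j + 1 : K) * coeff (j + 1) g)
        * (f ^ j * derivative K f))
        = (m + 1 : K) * (coeff (j + 1) g * coeff (m + 1) (f ^ (j + 1))) := by
      intro j
      have hpow : derivative K (f ^ (j + 1)) = (j + 1 : ℕ) • f ^ j • derivative K f := by
        simpa using Derivation.leibniz_pow (derivative K) f (j + 1)
      have hco : (j + 1 : K) * coeff m (f ^ j * derivative K f)
          = coeff m (derivative K (f ^ (j + 1))) := by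
        rw [hpow]
        rw [map_nsmul, smul_eq_mul, nsmul_eq_mul]
        push_cast
        ring
      rw [coeff_C_mul]
      calc (j + 1 : K) * coeff (j + 1) g * coeff m (f ^ j * derivative K f)
          = coeff (j + 1) g * ((j + 1 : K) * coeff m (f ^ j * derivative K f)) := by ring
        _ = coeff (j + 1) g * coeff m (derivative K (f ^ (j + 1))) := by rw [hco]
        _ = (m + 1 : K) * (coeff (j + 1) g * coeff (m + 1) (f ^ (j + 1))) := by
            rw [coeff_derivative]; push_cast; ring
    have hsum : coeff m S
        = (m + 1 : K) * ∑ j ∈ Finset.range n,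
            coeff (j + 1) g * coeff (m + 1) (f ^ (j + 1)) := by
      rw [hS, map_sum, Finset.mul_sum]
      exact Finset.sum_congr rfl fun j _ => hterm j
    have hk0 : coeff 0 g * coeff (m + 1) (f ^ 0) = 0 := by simp
    have hfull : ∑ k ∈ Finset.range (n + 1), coeff k g * coeff (m + 1) (f ^ k)
        = ∑ j ∈ Finset.range n, coeff (j + 1) g * coeff (m + 1) (f ^ (j + 1)) := by
      rw [Finset.sum_range_succ' (fun k => coeff k g * coeff (m + 1) (f ^ k)) n, hk0,
        add_zero]
    have hext : ∑ k ∈ Finset.range (n + 1), coeff k g * coeff (m + 1) (f ^ k)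
        = coeff (m + 1) (X : PowerSeries K) := by
      rw [← hgc (m + 1)]
      refine (Finset.sum_subset ?_ ?_).symm
      · intro x hx
        rw [Finset.mem_range] at hx ⊢
        omega
      · intro x _ hx
        simp only [Finset.mem_range, not_lt] at hx
        rw [coeff_pow_eq_zero' hf0 (by omega), mul_zero]
    rw [hsum, ← hfull, hext, coeff_X]
    rcases Nat.eq_zero_or_pos m with h0 | hpos
    · subst h0; norm_num
    · have h1 : ¬ (m + 1 = 1) := by omega
      have h2 : ¬ (m = 0) := by omega
      rw [if_neg h1, if_neg h2, mul_zero]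
  -- Step B : coeff r (S * h^n) = coeff r (h^n)
  have stepB : coeff r (S * h ^ n) = coeff r (h ^ n) := by
    have h1 : coeff r (S * h ^ n) = coeff r ((1 : PowerSeries K) * h ^ n) := by
      rw [coeff_mul, coeff_mul]
      apply Finset.sum_congr rfl
      intro p hp
      rw [Finset.HasAntidiagonal.mem_antidiagonal] at hp
      have hp1 : p.1 < n := by omega
      rw [stepA p.1 hp1, coeff_one]
    rw [h1, one_mul]
  -- constant coefficient of h * f' is 1
  have hconst : coeff 0 (h * derivative K f) = 1 := by
    have h1 : coeff 1 (h * f) = coeff 1 (X : PowerSeries K) := by rw [hh]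
    rw [coeff_X, if_pos rfl] at h1
    have h2 : coeff 1 (h * f)
        = coeff 0 h * coeff 1 f + coeff 1 h * coeff 0 f := by
      rw [coeff_mul, Finset.Nat.sum_antidiagonal_eq_sum_range_succ_mk]
      simp [Finset.sum_range_succ]
    have hf00 : coeff 0 f = 0 := by
      rw [coeff_zero_eq_constantCoeff]; exact hf0
    rw [h2, hf00, mul_zero, add_zero] at h1
    rw [coeff_mul, Finset.Nat.sum_antidiagonal_eq_sum_range_succ_mk]
    simp only [Finset.sum_range_succ, Finset.sum_range_zero, zero_add, Nat.sub_self,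
      coeff_derivative]
    simpa using h1
  -- Step C : coeff r (S * h^n) = n * g_n
  have stepC : coeff r (S * h ^ n) = ((r : K) + 1) * coeff n g := by
    have hSmul : coeff r (S * h ^ n) = ∑ j ∈ Finset.range n,
        ((j + 1 : K) * coeff (j + 1) g)
          * coeff r (f ^ j * derivative K f * h ^ n) := by
      rw [hS, Finset.sum_mul, map_sum]
      apply Finset.sum_congr rfl
      intro j _
      rw [mul_assoc, coeff_C_mul]
    have hfh : ∀ j : ℕ, j < n →
        f ^ j * derivative K f * h ^ n = X ^ j * (h ^ (n - j) * derivative K f) := by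
      intro j hj
      have hsplit : h ^ n = h ^ j * h ^ (n - j) := by
        rw [← pow_add]; congr 1; omega
      have hxj : f ^ j * h ^ j = X ^ j := by
        rw [← mul_pow, mul_comm f h, hh]
      calc f ^ j * derivative K f * h ^ n
          = (f ^ j * h ^ j) * (h ^ (n - j) * derivative K f) := by rw [hsplit]; ring
        _ = X ^ j * (h ^ (n - j) * derivative K f) := by rw [hxj]
    have hco : ∀ j : ℕ, j < n →
        coeff r (f ^ j * derivative K f * h ^ n)
          = coeff (r - j) (h ^ (n - j) * derivative K f) := by
      intro j hj
      rw [hfh j hj, coeff_X_pow_mul' _ j r, if_pos (by omega)]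
    rw [hSmul, Finset.sum_range_succ]
    have hzero : ∀ j ∈ Finset.range r,
        ((j + 1 : K) * coeff (j + 1) g)
          * coeff r (f ^ j * derivative K f * h ^ n) = 0 := by
      intro j hj
      rw [Finset.mem_range] at hj
      rw [hco j (by omega)]
      have hm : 1 ≤ r - j := by omega
      have hnj : n - j = (r - j) + 1 := by omega
      rw [hnj, residue_lemma' hh hm, mul_zero]
    rw [Finset.sum_eq_zero hzero, zero_add, hco r (by omega), Nat.sub_self]
    have hnr : n - r = 1 := by omega
    rw [hnr, pow_one, hconst, mul_one, hn]
  have hrK : ((r : K) + 1) ≠ 0 := by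
    have : ((r + 1 : ℕ) : K) ≠ 0 := Nat.cast_ne_zero.mpr (by omega)
    push_cast at this
    exact this
  have final : ((r : K) + 1) * coeff n g = coeff r (h ^ n) := by
    rw [← stepC, stepB]
  rw [hn] at final
  rw [← final, one_div, inv_mul_cancel_left₀ hrK]
end

section
/- For r ≥ 0, the Fuss–Catalan number FC_r(3,1) = (1/(3r+1))·binomial(3r+1, r) equals (1/(r+1)) times the coefficient of x^r in B₂(x)^{r+1}, where B₂ is the Catalan generating function satisfying B₂ = 1 + x·B₂². -/
open PowerSeries

/-- Ballot-type numbers: `a n k = C(2n+k, n) * k / (2n+k)`. -/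
def fcA (n k : ℕ) : ℚ := ((2*n+k).choose n) * k / (2*n+k)

lemma fcA_zero_left (k : ℕ) : fcA 0 (k+1) = 1 := by
  simp [fcA]
  field_simp
  exact Nat.cast_add_one_ne_zero k

lemma fcA_zero_right (n : ℕ) : fcA (n+1) 0 = 0 := by
  simp [fcA]

lemma fcA_rec (n k : ℕ) : fcA (n+1) (k+1) = fcA (n+1) k + fcA n (k+2) := by
  have h1 : 2*(n+1)+(k+1) = 2*n+k+3 := by ring
  have h2 : 2*(n+1)+k = 2*n+k+2 := by ring
  have h3 : 2*n+(k+2) = 2*n+k+2 := by ring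
  have pascal : (2*n+k+3).choose (n+1)
      = (2*n+k+2).choose n + (2*n+k+2).choose (n+1) :=
    Nat.choose_succ_succ _ _
  have key : ((2*n+k+2).choose (n+1)) * (n+1) = (2*n+k+2).choose n * (n+k+2) := by
    have := Nat.choose_succ_right_eq (2*n+k+2) n
    simpa [show 2*n+k+2 - n = n+k+2 by omega] using this
  have keyQ : ((2*n+k+2).choose (n+1) : ℚ) * (n+1) = ((2*n+k+2).choose n : ℚ) * (n+k+2) := by
    exact_mod_cast congrArg (Nat.cast : ℕ → ℚ) key
  unfold fcA
  rw [h1, h2, h3, pascal]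
  have hM : ((2*n+k+2 : ℕ) : ℚ) ≠ 0 := by positivity
  have hM1 : ((2*n+k+3 : ℕ) : ℚ) ≠ 0 := by positivity
  push_cast at keyQ ⊢
  have hMQ : (2*(n:ℚ)+k+2) ≠ 0 := by positivity
  have hM1Q : (2*(n:ℚ)+k+3) ≠ 0 := by positivity
  have e1 : (2*((n:ℚ)+1)+((k:ℚ)+1)) = 2*(n:ℚ)+k+3 := by ring
  have e2 : (2*((n:ℚ)+1)+(k:ℚ)) = 2*(n:ℚ)+k+2 := by ring
  have e3 : (2*(n:ℚ)+((k:ℚ)+2)) = 2*(n:ℚ)+k+2 := by ring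
  rw [e1, e2, e3, ← add_div, div_eq_div_iff hM1Q hMQ]
  linear_combination 2 * keyQ

theorem stmt_13 (B2 : PowerSeries ℚ) (hB2c : constantCoeff B2 = 1)
    (hB2 : B2 = 1 + PowerSeries.X * B2 ^ 2) (r : ℕ) :
    ((3 * r + 1).choose r : ℚ) / (3 * r + 1) =
      ((1 : ℚ) / (r + 1)) * coeff r (B2 ^ (r + 1)) := by
  have hstep : ∀ k : ℕ, B2 ^ (k+1) = B2 ^ k + PowerSeries.X * B2 ^ (k+2) := by
    intro k
    calc B2 ^ (k+1) = B2 ^ k * B2 := by ring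
    _ = B2 ^ k * (1 + PowerSeries.X * B2 ^ 2) := by rw [← hB2]
    _ = B2 ^ k + PowerSeries.X * B2 ^ (k+2) := by ring
  have main : ∀ n k : ℕ, coeff n (B2 ^ (k+1)) = fcA n (k+1) := by
    intro n
    induction n with
    | zero =>
      intro k
      rw [coeff_zero_eq_constantCoeff, map_pow, hB2c, one_pow, fcA_zero_left]
    | succ n ih =>
      intro k
      induction k with
      | zero =>
        rw [hstep 0, map_add, pow_zero, coeff_succ_X_mul, coeff_one]
        simp only [Nat.succ_ne_zero, if_false, zero_add]
        rw [ih 1]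
        have := fcA_rec n 0
        rw [fcA_zero_right] at this
        rw [this, zero_add]
      | succ k ihk =>
        rw [hstep (k+1), map_add, coeff_succ_X_mul, ihk, ih (k+2),
          show k+2+1 = k+1+2 from rfl, ← fcA_rec n (k+1)]
  have hmain := main r r
  rw [hmain]
  unfold fcA
  have h3r : (2*r + (r+1)) = 3*r+1 := by ring
  rw [h3r]
  have h1 : ((3*r+1 : ℕ) : ℚ) ≠ 0 := by positivity
  have h2 : ((r:ℚ) + 1) ≠ 0 := by positivity
  push_cast
  have e : (2*(r:ℚ)+((r:ℚ)+1)) = 3*(r:ℚ)+1 := by ring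
  rw [e, one_div_mul_eq_div, div_div, mul_comm (((3*r+1).choose r : ℚ)) ((r:ℚ)+1),
    mul_comm (3*(r:ℚ)+1) ((r:ℚ)+1), mul_div_mul_left _ _ h2]
end

section
/- The number of noncrossing partitions of mk points on a line into blocks each of size exactly k, such that no two blocks cross, is the Fuss–Catalan number FC_m(k,1) = (1/(mk+1))·binomial(mk+1, m). -/
open Finset

/-- `M` is a noncrossing partition of the points `0, 1, ..., mk-1` on a line into blocks
all of size exactly `k`: every point is covered, distinct blocks are disjoint, and no two
blocks `B`, `B'` cross, i.e. there are no `a, b ∈ B` and `c, d ∈ B'` with `a < c < b < d`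
for distinct blocks. -/
def IsNoncrossingKPartition (m k : ℕ) (M : Finset (Finset (Fin (m * k)))) : Prop :=
  (∀ B ∈ M, B.card = k) ∧
  (∀ i : Fin (m * k), ∃ B ∈ M, i ∈ B) ∧
  (∀ B ∈ M, ∀ B' ∈ M, B ≠ B' → Disjoint B B') ∧
  (∀ B ∈ M, ∀ B' ∈ M, B ≠ B' → ∀ a ∈ B, ∀ b ∈ B, ∀ c ∈ B', ∀ d ∈ B',
    ¬(a < c ∧ c < b ∧ b < d))

namespace FussCatalan

open scoped Classical

def bmax (B : Finset ℕ) : ℕ := B.max.getD 0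

lemma bmax_mem {B : Finset ℕ} (h : B.Nonempty) : bmax B ∈ B := by
  obtain ⟨a, ha⟩ := Finset.max_of_nonempty h
  unfold bmax; rw [ha]; exact Finset.mem_of_max ha

lemma le_bmax {B : Finset ℕ} {x : ℕ} (h : x ∈ B) : x ≤ bmax B := by
  have := Finset.le_max h
  obtain ⟨a, ha⟩ := Finset.max_of_nonempty ⟨x, h⟩
  rw [ha] at this
  unfold bmax; rw [ha]; exact WithBot.coe_le_coe.mp this

def Valid (k n : ℕ) (S : Finset ℕ) : Prop :=
  ∀ t, 1 ≤ t → t ≤ n → t ≤ k * (S.filter (fun x => x < t)).card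

noncomputable def Bset (k m c : ℕ) : Finset (Finset ℕ) :=
  ((Finset.range (m*k)).powerset).filter
    (fun S => S.card = m ∧ Valid k (m*k) S ∧ ∀ i ∈ S, i < c)

lemma mem_Bset {k m c : ℕ} {S : Finset ℕ} :
    S ∈ Bset k m c ↔ S ⊆ Finset.range (m*k) ∧ S.card = m ∧ Valid k (m*k) S ∧ ∀ i ∈ S, i < c := by
  simp [Bset, and_assoc]

lemma stepB (k m c : ℕ) (hk : 1 ≤ k) :
    (Bset k (m+1) c).card = ∑ j ∈ Finset.range (min c (m*k+1)), (Bset k m j).card := by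
  have key : ∀ S ∈ Bset k (m+1) c, bmax S ∈ S ∧ (∀ x ∈ S, x ≤ bmax S) ∧ bmax S < c ∧ bmax S ≤ m*k ∧
      S.erase (bmax S) = S.filter (fun x => x < bmax S) := by
    intro S hS
    rw [mem_Bset] at hS
    obtain ⟨hsub, hcard, hval, hlt⟩ := hS
    have hne : S.Nonempty := Finset.card_pos.mp (by omega)
    have hmem : bmax S ∈ S := bmax_mem hne
    have hub : ∀ x ∈ S, x ≤ bmax S := fun x hx => le_bmax hx
    have herase : S.erase (bmax S) = S.filter (fun x => x < bmax S) := by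
      ext x
      simp only [Finset.mem_erase, Finset.mem_filter]
      constructor
      · rintro ⟨hne', hx⟩; exact ⟨hx, lt_of_le_of_ne (hub x hx) hne'⟩
      · rintro ⟨hx, hlt'⟩; exact ⟨Nat.ne_of_lt hlt', hx⟩
    refine ⟨hmem, hub, hlt _ hmem, ?_, herase⟩
    -- bmax S ≤ m*k
    by_cases hj0 : bmax S = 0
    · omega
    · have h1 : bmax S < (m+1)*k := Finset.mem_range.mp (hsub hmem)
      have := hval (bmax S) (by omega) (by omega)
      rw [← herase] at this
      have hce : (S.erase (bmax S)).card = m := by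
        rw [Finset.card_erase_of_mem hmem, hcard]
        omega
      rw [hce] at this
      calc bmax S ≤ k * m := this
        _ = m * k := Nat.mul_comm k m
  rw [Finset.card_eq_sum_card_fiberwise (f := fun S => bmax S)
    (t := Finset.range (min c (m*k+1)))
    (fun S hS => by
      obtain ⟨_, _, h1, h2, _⟩ := key S hS
      simp only [Finset.mem_coe, Finset.mem_range]
      omega)]
  refine Finset.sum_congr rfl ?_
  intro j hj
  rw [Finset.mem_range] at hj
  have hjc : j < c := lt_of_lt_of_le hj (min_le_left _ _)
  have hjmk : j ≤ m*k := by have := lt_of_lt_of_le hj (min_le_right _ _); omega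
  apply Finset.card_nbij' (i := fun S => S.erase j) (j := fun S' => insert j S')
  · -- maps into Bset k m j
    intro S hS
    simp only [Finset.mem_coe, Finset.mem_filter] at hS
    obtain ⟨hS, hjof⟩ := hS
    obtain ⟨hmem, hub, -, -, herase⟩ := key S hS
    rw [hjof] at hmem hub herase
    rw [mem_Bset] at hS
    obtain ⟨hsub, hcard, hval, hlt⟩ := hS
    have hlt' : ∀ x ∈ S.erase j, x < j := by
      intro x hx
      rw [Finset.mem_erase] at hx
      exact lt_of_le_of_ne (hub x hx.2) hx.1
    rw [Finset.mem_coe, mem_Bset]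
    refine ⟨?_, ?_, ?_, hlt'⟩
    · intro x hx
      rw [Finset.mem_range]
      exact lt_of_lt_of_le (hlt' x hx) hjmk
    · rw [Finset.card_erase_of_mem hmem, hcard]
      omega
    · intro t ht1 ht2
      by_cases htj : t ≤ j
      · have hfe : (S.erase j).filter (fun x => x < t) = S.filter (fun x => x < t) := by
          ext x
          simp only [Finset.mem_filter, Finset.mem_erase]
          constructor
          · rintro ⟨⟨_, hx⟩, h⟩; exact ⟨hx, h⟩
          · rintro ⟨hx, h⟩; exact ⟨⟨by omega, hx⟩, h⟩
        rw [hfe]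
        exact hval t ht1 (by nlinarith)
      · have hfe : (S.erase j).filter (fun x => x < t) = S.erase j := by
          apply Finset.filter_true_of_mem
          intro x hx
          have := hlt' x hx
          omega
        have hce : (S.erase j).card = m := by
          rw [Finset.card_erase_of_mem hmem, hcard]
          omega
        rw [hfe, hce]
        calc t ≤ m * k := ht2
          _ = k * m := Nat.mul_comm _ _
  · -- maps back
    intro S' hS'
    rw [Finset.mem_coe, mem_Bset] at hS'
    obtain ⟨hsub, hcard, hval, hlt⟩ := hS'
    have hjS' : j ∉ S' := fun h => absurd (hlt j h) (lt_irrefl j)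
    simp only [Finset.mem_coe, Finset.mem_filter]
    constructor
    · rw [mem_Bset]
      refine ⟨?_, ?_, ?_, ?_⟩
      · intro x hx
        rw [Finset.mem_insert] at hx
        rw [Finset.mem_range]
        rcases hx with rfl | hx
        · nlinarith
        · have := hlt x hx
          nlinarith
      · rw [Finset.card_insert_of_notMem hjS', hcard]
      · intro t ht1 ht2
        by_cases htj : t ≤ j
        · have hfe : (insert j S').filter (fun x => x < t) = S'.filter (fun x => x < t) := by
            ext x
            simp only [Finset.mem_filter, Finset.mem_insert]
            constructor
            · rintro ⟨rfl | hx, h⟩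
              · omega
              · exact ⟨hx, h⟩
            · rintro ⟨hx, h⟩; exact ⟨Or.inr hx, h⟩
          rw [hfe]
          exact hval t ht1 (by omega)
        · have hfe : (insert j S').filter (fun x => x < t) = insert j S' := by
            apply Finset.filter_true_of_mem
            intro x hx
            rw [Finset.mem_insert] at hx
            rcases hx with rfl | hx
            · omega
            · have := hlt x hx; omega
          rw [hfe, Finset.card_insert_of_notMem hjS', hcard]
          calc t ≤ (m+1) * k := ht2
            _ = k * (m+1) := Nat.mul_comm _ _
      · intro x hx
        rw [Finset.mem_insert] at hx
        rcases hx with rfl | hx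
        · exact hjc
        · exact lt_trans (hlt x hx) hjc
    · -- bmax = j
      have h1 : j ≤ bmax (insert j S') := le_bmax (Finset.mem_insert_self j S')
      have h2 : bmax (insert j S') ≤ j := by
        have hmem : bmax (insert j S') ∈ insert j S' := bmax_mem ⟨j, Finset.mem_insert_self j S'⟩
        rw [Finset.mem_insert] at hmem
        rcases hmem with h | h
        · omega
        · exact le_of_lt (hlt _ h)
      omega
  · intro S hS
    simp only [Finset.mem_coe, Finset.mem_filter] at hS
    obtain ⟨hS, hjof⟩ := hS
    obtain ⟨hmem, -, -, -, -⟩ := key S hS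
    rw [hjof] at hmem
    exact Finset.insert_erase hmem
  · intro S' hS'
    rw [Finset.mem_coe, mem_Bset] at hS'
    have hjS' : j ∉ S' := fun h => absurd (hS'.2.2.2 j h) (lt_irrefl j)
    exact Finset.erase_insert hjS'


/-- count of i in [0,t) with i % N1 ∈ T -/
noncomputable def cnt (N1 : ℕ) (T : Finset ℕ) (t : ℕ) : ℕ :=
  ((Finset.range t).filter (fun i => i % N1 ∈ T)).card

noncomputable def G (k N1 : ℕ) (T : Finset ℕ) (t : ℕ) : ℤ :=
  (k : ℤ) * cnt N1 T t - t

noncomputable def rot (N1 r : ℕ) (T : Finset ℕ) : Finset ℕ :=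
  T.image (fun x => (x + r) % N1)

variable {N1 k m : ℕ} {T : Finset ℕ}

lemma cnt_succ (t : ℕ) : cnt N1 T (t+1) = cnt N1 T t + (if t % N1 ∈ T then 1 else 0) := by
  unfold cnt
  rw [Finset.range_add_one, Finset.filter_insert]
  split <;> simp [Finset.card_insert_of_notMem, Finset.notMem_range_self]

lemma cnt_mono {t u : ℕ} (h : t ≤ u) : cnt N1 T t ≤ cnt N1 T u := by
  apply Finset.card_le_card
  apply Finset.filter_subset_filter
  exact Finset.range_subset_range.mpr h

lemma cnt_base (hT : T ⊆ Finset.range N1) : cnt N1 T N1 = T.card := by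
  unfold cnt
  congr 1
  ext i
  simp only [Finset.mem_filter, Finset.mem_range]
  constructor
  · rintro ⟨hi, h⟩
    rwa [Nat.mod_eq_of_lt hi] at h
  · intro h
    have hi : i < N1 := Finset.mem_range.mp (hT h)
    exact ⟨hi, by rwa [Nat.mod_eq_of_lt hi]⟩

lemma cnt_period (hT : T ⊆ Finset.range N1) (t : ℕ) :
    cnt N1 T (t + N1) = cnt N1 T t + T.card := by
  induction t with
  | zero => simpa [cnt] using cnt_base hT
  | succ t ih =>
    have : t + 1 + N1 = (t + N1) + 1 := by omega
    rw [this, cnt_succ, ih, cnt_succ]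
    have : (t + N1) % N1 = t % N1 := Nat.add_mod_right t N1
    rw [this]
    ring

lemma G_period (hT : T ⊆ Finset.range N1) (hcard : T.card = m) (hN1 : N1 = m * k + 1) (t : ℕ) :
    G k N1 T (t + N1) = G k N1 T t - 1 := by
  unfold G
  rw [cnt_period hT, hcard]
  push_cast
  rw [hN1]
  push_cast
  ring

lemma add_rs_mod {r s : ℕ} (hrs : (r + s) % N1 = 0) (a : ℕ) :
    (a + (r + s)) % N1 = a % N1 := by
  rw [Nat.add_mod, hrs]; simp

lemma mem_rot {r s x : ℕ} (hT : T ⊆ Finset.range N1) (hrs : (r + s) % N1 = 0) (hx' : x < N1) :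
    x ∈ rot N1 r T ↔ (x + s) % N1 ∈ T := by
  constructor
  · rintro hx
    obtain ⟨y, hy, rfl⟩ := Finset.mem_image.mp hx
    have hyN : y < N1 := Finset.mem_range.mp (hT hy)
    have : ((y + r) % N1 + s) % N1 = y := by
      calc ((y + r) % N1 + s) % N1 = (y + r + s) % N1 := Nat.mod_add_mod _ _ _
        _ = (y + (r + s)) % N1 := by ring_nf
        _ = y % N1 := add_rs_mod hrs y
        _ = y := Nat.mod_eq_of_lt hyN
    rw [this]
    exact hy
  · intro hx
    apply Finset.mem_image.mpr
    refine ⟨(x + s) % N1, hx, ?_⟩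
    have hxN : x % N1 = x := Nat.mod_eq_of_lt hx'
    calc ((x + s) % N1 + r) % N1 = (x + s + r) % N1 := Nat.mod_add_mod _ _ _
      _ = (x + (r + s)) % N1 := by ring_nf
      _ = x % N1 := add_rs_mod hrs x
      _ = x := hxN

lemma rot_subset (r : ℕ) (hN : 0 < N1) : rot N1 r T ⊆ Finset.range N1 := by
  intro x hx
  obtain ⟨y, _, rfl⟩ := Finset.mem_image.mp hx
  exact Finset.mem_range.mpr (Nat.mod_lt _ hN)

lemma rot_card (r : ℕ) (hT : T ⊆ Finset.range N1) : (rot N1 r T).card = T.card := by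
  apply Finset.card_image_of_injOn
  intro x hx y hy hxy
  have hxN : x < N1 := Finset.mem_range.mp (hT hx)
  have hyN : y < N1 := Finset.mem_range.mp (hT hy)
  have : x % N1 = y % N1 := Nat.ModEq.add_right_cancel' r hxy
  rwa [Nat.mod_eq_of_lt hxN, Nat.mod_eq_of_lt hyN] at this

lemma rot_rot (r s : ℕ) (hN : 0 < N1) : rot N1 r (rot N1 s T) = rot N1 ((r + s) % N1) T := by
  unfold rot
  rw [Finset.image_image]
  apply Finset.image_congr
  intro x _
  show ((x + s) % N1 + r) % N1 = (x + (r + s) % N1) % N1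
  calc ((x + s) % N1 + r) % N1 = (x + s + r) % N1 := Nat.mod_add_mod _ _ _
    _ = (x + (r + s)) % N1 := by ring_nf
    _ = (x + (r + s) % N1) % N1 := by
        rw [Nat.add_mod x (r+s), Nat.add_mod x ((r+s) % N1), Nat.mod_mod_of_dvd _ dvd_rfl]

lemma rot_zero (hT : T ⊆ Finset.range N1) : rot N1 0 T = T := by
  unfold rot
  rw [show T = T.image id from (Finset.image_id).symm]
  rw [Finset.image_image]
  apply Finset.image_congr
  intro x hx
  show (x + 0) % N1 = id x
  have : x < N1 := Finset.mem_range.mp (hT (by simpa using hx))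
  simp [Nat.mod_eq_of_lt this]

lemma cnt_split (s t : ℕ) :
    cnt N1 T (s + t) = cnt N1 T s + ((Finset.Ico s (s+t)).filter (fun i => i % N1 ∈ T)).card := by
  unfold cnt
  rw [← Finset.card_union_of_disjoint, ← Finset.filter_union]
  · congr 2
    rw [Finset.range_eq_Ico, Finset.range_eq_Ico]
    exact (Finset.Ico_union_Ico_eq_Ico (a := 0) (b := s) (c := s+t) (by omega) (by omega)).symm
  · apply Finset.disjoint_filter_filter
    rw [Finset.range_eq_Ico]
    exact Finset.Ico_disjoint_Ico_consecutive 0 s (s+t)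

lemma rot_filter_cnt {r s t : ℕ} (hT : T ⊆ Finset.range N1) (hrs : (r + s) % N1 = 0)
    (ht : t ≤ N1) :
    cnt N1 T s + ((rot N1 r T).filter (fun x => x < t)).card = cnt N1 T (s + t) := by
  rw [cnt_split s t]
  congr 1
  apply Finset.card_nbij' (i := fun x => x + s) (j := fun i => i - s)
  · intro x hx
    simp only [Finset.mem_coe, Finset.mem_filter, Finset.mem_Ico] at hx ⊢
    obtain ⟨hx1, hx2⟩ := hx
    have hxN : x < N1 := by omega
    refine ⟨⟨by omega, by omega⟩, ?_⟩
    exact (mem_rot hT hrs hxN).mp hx1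
  · intro i hi
    simp only [Finset.mem_coe, Finset.mem_filter, Finset.mem_Ico] at hi ⊢
    obtain ⟨⟨hi1, hi2⟩, hi3⟩ := hi
    have hiN : i - s < N1 := by omega
    refine ⟨?_, by omega⟩
    apply (mem_rot hT hrs hiN).mpr
    have : i - s + s = i := by omega
    rwa [this]
  · intro x _; dsimp only; omega
  · intro i hi
    simp only [Finset.mem_coe, Finset.mem_filter, Finset.mem_Ico] at hi
    dsimp only
    omega

lemma valid_rot_iff {r s : ℕ} (hT : T ⊆ Finset.range N1) (hrs : (r + s) % N1 = 0)
    (hN1 : N1 = m * k + 1) :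
    Valid k (m*k) (rot N1 r T) ↔ ∀ t, 1 ≤ t → t ≤ m*k → G k N1 T s ≤ G k N1 T (s+t) := by
  unfold Valid
  apply forall_congr'
  intro t
  apply imp_congr_right
  intro ht1
  apply imp_congr_right
  intro ht2
  have hc := rot_filter_cnt (t := t) hT hrs (by omega)
  set A := ((rot N1 r T).filter (fun x => x < t)).card with hA
  have hGdiff : G k N1 T (s+t) - G k N1 T s = (k:ℤ) * A - t := by
    unfold G
    rw [← hc]
    push_cast
    ring
  constructor
  · intro h
    have : (t:ℤ) ≤ (k:ℤ) * A := by exact_mod_cast Nat.cast_le.mpr h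
    omega
  · intro h
    have : (t:ℤ) ≤ (k:ℤ) * A := by omega
    exact_mod_cast this

lemma sinv_zero_mod {r : ℕ} (hr : r < N1) : (r + (N1 - r) % N1) % N1 = 0 := by
  by_cases h0 : r = 0
  · subst h0; simp [Nat.mod_self]
  · have h1 : (N1 - r) % N1 = N1 - r := Nat.mod_eq_of_lt (by omega)
    rw [h1, show r + (N1 - r) = N1 by omega, Nat.mod_self]

lemma sinv_lt (hN : 0 < N1) (r : ℕ) : (N1 - r) % N1 < N1 := Nat.mod_lt _ hN

lemma sinv_inj {r r' : ℕ} (hr : r < N1) (hr' : r' < N1)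
    (h : (N1 - r) % N1 = (N1 - r') % N1) : r = r' := by
  by_cases h0 : r = 0 <;> by_cases h0' : r' = 0
  · omega
  · subst h0
    rw [Nat.sub_zero, Nat.mod_self, Nat.mod_eq_of_lt (by omega)] at h
    omega
  · subst h0'
    rw [Nat.sub_zero, Nat.mod_self, Nat.mod_eq_of_lt (by omega)] at h
    omega
  · rw [Nat.mod_eq_of_lt (by omega), Nat.mod_eq_of_lt (by omega)] at h
    omega

lemma sinv_sinv {s : ℕ} (hs : s < N1) : (N1 - (N1 - s) % N1) % N1 = s := by
  by_cases h0 : s = 0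
  · subst h0; simp [Nat.mod_self]
  · rw [Nat.mod_eq_of_lt (show N1 - s < N1 by omega),
      show N1 - (N1 - s) = s by omega, Nat.mod_eq_of_lt hs]

lemma P_exists (hT : T ⊆ Finset.range N1) (hcard : T.card = m) (hN1 : N1 = m*k+1) :
    ∃ s < N1, ∀ t, 1 ≤ t → t ≤ m*k → G k N1 T s ≤ G k N1 T (s+t) := by
  have hN : 0 < N1 := by omega
  obtain ⟨s1, hs1, hmin⟩ := Finset.exists_min_image (Finset.range N1) (G k N1 T)
    ⟨0, Finset.mem_range.mpr hN⟩
  set F := (Finset.range N1).filter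
    (fun s => ∀ u ∈ Finset.range N1, G k N1 T s ≤ G k N1 T u) with hF
  have hFne : F.Nonempty := ⟨s1, by
    rw [hF, Finset.mem_filter]; exact ⟨hs1, hmin⟩⟩
  set s0 := F.min' hFne with hs0
  have hs0F : s0 ∈ F := Finset.min'_mem F hFne
  rw [hF, Finset.mem_filter] at hs0F
  obtain ⟨hs0r, hs0min⟩ := hs0F
  have hs0N : s0 < N1 := Finset.mem_range.mp hs0r
  refine ⟨s0, hs0N, ?_⟩
  intro t ht1 ht2
  by_cases hcase : s0 + t < N1
  · exact hs0min _ (Finset.mem_range.mpr hcase)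
  · set u := s0 + t - N1 with hu
    have hus : u < s0 := by omega
    have heq : s0 + t = u + N1 := by omega
    rw [heq, G_period hT hcard hN1]
    have h1 : G k N1 T s0 ≤ G k N1 T u := hs0min _ (Finset.mem_range.mpr (by omega))
    have h2 : G k N1 T s0 ≠ G k N1 T u := by
      intro hc
      have huF : u ∈ F := by
        rw [hF, Finset.mem_filter]
        refine ⟨Finset.mem_range.mpr (by omega), ?_⟩
        intro v hv
        rw [← hc]; exact hs0min v hv
      have := Finset.min'_le F u huF
      omega
    omega

lemma P_unique (hT : T ⊆ Finset.range N1) (hcard : T.card = m) (hN1 : N1 = m*k+1)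
    {s s' : ℕ} (hs : s < N1) (hs' : s' < N1)
    (h : ∀ t, 1 ≤ t → t ≤ m*k → G k N1 T s ≤ G k N1 T (s+t))
    (h' : ∀ t, 1 ≤ t → t ≤ m*k → G k N1 T s' ≤ G k N1 T (s'+t)) : s = s' := by
  have key : ∀ a b, a < b → b < N1 →
      (∀ t, 1 ≤ t → t ≤ m*k → G k N1 T a ≤ G k N1 T (a+t)) →
      (∀ t, 1 ≤ t → t ≤ m*k → G k N1 T b ≤ G k N1 T (b+t)) → False := by
    intro a b hab hbN ha hb
    have h1 := ha (b - a) (by omega) (by omega)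
    rw [show a + (b - a) = b by omega] at h1
    have h2 := hb (N1 - (b - a)) (by omega) (by omega)
    rw [show b + (N1 - (b - a)) = a + N1 by omega, G_period hT hcard hN1] at h2
    omega
  rcases lt_trichotomy s s' with hlt | heq | hgt
  · exact absurd (key s s' hlt hs' h h') (fun x => x)
  · exact heq
  · exact absurd (key s' s hgt hs h' h) (fun x => x)

lemma valid_sub (hk : 1 ≤ k) {T' : Finset ℕ} (hT' : T' ⊆ Finset.range (m*k+1))
    (hcard : T'.card = m) (hval : Valid k (m*k) T') : T' ⊆ Finset.range (m*k) := by
  by_cases hm : m = 0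
  · subst hm
    have : T' = ∅ := Finset.card_eq_zero.mp hcard
    simp [this]
  · intro x hx
    rw [Finset.mem_range]
    have hxle : x < m*k+1 := Finset.mem_range.mp (hT' hx)
    by_contra hc
    have hxe : x = m*k := by omega
    subst hxe
    have hmk1 : 1 ≤ m*k := by
      rcases Nat.eq_zero_or_pos (m*k) with h | h
      · exfalso; exact hm (by rcases Nat.mul_eq_zero.mp h with h' | h' <;> omega)
      · exact h
    have := hval (m*k) hmk1 (le_refl _)
    have hsub : T'.filter (fun y => y < m*k) ⊆ T'.erase (m*k) := by
      intro y hy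
      rw [Finset.mem_filter] at hy
      rw [Finset.mem_erase]
      exact ⟨by omega, hy.1⟩
    have hcle : (T'.filter (fun y => y < m*k)).card ≤ m - 1 := by
      calc (T'.filter (fun y => y < m*k)).card ≤ (T'.erase (m*k)).card := Finset.card_le_card hsub
        _ = m - 1 := by rw [Finset.card_erase_of_mem hx, hcard]
    have : m*k ≤ k * (m-1) := le_trans this (Nat.mul_le_mul_left k hcle)
    have h2 : k * (m - 1) = k * m - k := by
      rw [Nat.mul_sub_one]
    rw [h2, Nat.mul_comm k m] at this
    omega

lemma Bset_card_mul (k m : ℕ) (hk : 1 ≤ k) :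
    (Bset k m (m*k)).card * (m*k+1) = (m*k+1).choose m := by
  set N1 := m*k+1 with hN1
  have hN : 0 < N1 := by omega
  have hrhs : (Finset.powersetCard m (Finset.range N1)).card = N1.choose m := by
    rw [Finset.card_powersetCard, Finset.card_range]
  rw [← hrhs, ← Finset.card_range N1 , ← Finset.card_product]
  rw [Finset.card_range N1]
  apply Finset.card_nbij (i := fun p => rot N1 p.2 p.1)
  · -- maps into powersetCard
    rintro ⟨S, r⟩ hp
    rw [Finset.mem_coe, Finset.mem_product] at hp
    obtain ⟨hS, hr⟩ := hp
    rw [mem_Bset] at hS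
    have hsub : S ⊆ Finset.range N1 := fun x hx => Finset.mem_range.mpr
      (by have := Finset.mem_range.mp (hS.1 hx); omega)
    rw [Finset.mem_coe, Finset.mem_powersetCard]
    exact ⟨rot_subset _ hN, by rw [rot_card _ hsub, hS.2.1]⟩
  · -- injective
    rintro ⟨S, r⟩ hp ⟨S', r'⟩ hp' heq
    simp only [Finset.coe_product, Set.mem_prod, Finset.mem_coe] at hp hp'
    obtain ⟨hS, hr⟩ := hp
    obtain ⟨hS', hr'⟩ := hp'
    rw [mem_Bset] at hS hS'
    rw [Finset.mem_range] at hr hr'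
    have hsub : S ⊆ Finset.range N1 := fun x hx => Finset.mem_range.mpr
      (by have := Finset.mem_range.mp (hS.1 hx); omega)
    have hsub' : S' ⊆ Finset.range N1 := fun x hx => Finset.mem_range.mpr
      (by have := Finset.mem_range.mp (hS'.1 hx); omega)
    simp only at heq
    set T := rot N1 r S with hT
    have hTsub : T ⊆ Finset.range N1 := rot_subset _ hN
    have hTcard : T.card = m := by rw [hT, rot_card _ hsub, hS.2.1]
    -- recovery
    have hrec : rot N1 ((N1 - r) % N1) T = S := by
      rw [hT, rot_rot _ _ hN]
      rw [show ((N1 - r) % N1 + r) % N1 = 0 by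
        rw [Nat.add_comm]; exact sinv_zero_mod hr]
      exact rot_zero hsub
    have hrec' : rot N1 ((N1 - r') % N1) T = S' := by
      rw [heq, rot_rot _ _ hN]
      rw [show ((N1 - r') % N1 + r') % N1 = 0 by
        rw [Nat.add_comm]; exact sinv_zero_mod hr']
      exact rot_zero hsub'
    -- both rotations are valid
    have hv1 : Valid k (m*k) (rot N1 ((N1 - r) % N1) T) := by rw [hrec]; exact hS.2.2.1
    have hv2 : Valid k (m*k) (rot N1 ((N1 - r') % N1) T) := by rw [hrec']; exact hS'.2.2.1
    -- translate to P via valid_rot_iff with s := sinv (sinv r) = r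
    have hP1 := (valid_rot_iff (s := (N1 - (N1 - r) % N1) % N1) hTsub
      (sinv_zero_mod (sinv_lt hN r)) hN1).mp hv1
    have hP2 := (valid_rot_iff (s := (N1 - (N1 - r') % N1) % N1) hTsub
      (sinv_zero_mod (sinv_lt hN r')) hN1).mp hv2
    rw [sinv_sinv hr] at hP1
    rw [sinv_sinv hr'] at hP2
    have := P_unique hTsub hTcard hN1 hr hr' hP1 hP2
    subst this
    have : S = S' := by rw [← hrec, ← hrec']
    simp [this]
  · -- surjective
    intro T hT'
    rw [Finset.mem_coe, Finset.mem_powersetCard] at hT'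
    obtain ⟨hTsub, hTcard⟩ := hT'
    obtain ⟨s, hs, hPs⟩ := P_exists hTsub hTcard hN1
    set r := (N1 - s) % N1 with hr
    have hrN : r < N1 := sinv_lt hN s
    have hrs : (r + s) % N1 = 0 := by
      rw [hr, Nat.add_comm]; exact sinv_zero_mod hs
    have hvalid : Valid k (m*k) (rot N1 r T) :=
      (valid_rot_iff hTsub hrs hN1).mpr hPs
    set S := rot N1 r T with hS
    have hSsub1 : S ⊆ Finset.range N1 := rot_subset _ hN
    have hScard : S.card = m := by rw [hS, rot_card _ hTsub, hTcard]
    have hSsub : S ⊆ Finset.range (m*k) := valid_sub hk hSsub1 hScard hvalid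
    refine ⟨(S, (N1 - r) % N1), ?_, ?_⟩
    · simp only [Finset.coe_product, Set.mem_prod, Finset.mem_coe]
      constructor
      · rw [mem_Bset]
        exact ⟨hSsub, hScard, hvalid, fun i hi => Finset.mem_range.mp (hSsub hi)⟩
      · exact Finset.mem_range.mpr (sinv_lt hN r)
    · simp only
      rw [hS, rot_rot _ _ hN]
      rw [show ((N1 - r) % N1 + r) % N1 = 0 by rw [Nat.add_comm]; exact sinv_zero_mod hrN]
      exact rot_zero hTsub

lemma Bset_zero (k c : ℕ) : Bset k 0 c = {∅} := by
  ext S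
  simp only [mem_Bset, Finset.mem_singleton]
  constructor
  · rintro ⟨h1, h2, -, -⟩
    exact Finset.card_eq_zero.mp h2
  · rintro rfl
    refine ⟨by simp, by simp, ?_, by simp⟩
    intro t ht1 ht2
    omega


def bmin (B : Finset ℕ) : ℕ := B.min.getD 0

lemma bmin_mem {B : Finset ℕ} (h : B.Nonempty) : bmin B ∈ B := by
  obtain ⟨a, ha⟩ := Finset.min_of_nonempty h
  unfold bmin; rw [ha]; exact Finset.mem_of_min ha

lemma bmin_le {B : Finset ℕ} {x : ℕ} (h : x ∈ B) : bmin B ≤ x := by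
  have := Finset.min_le h
  obtain ⟨a, ha⟩ := Finset.min_of_nonempty ⟨x, h⟩
  rw [ha] at this
  unfold bmin; rw [ha]; exact WithTop.coe_le_coe.mp this

def NCP (k n : ℕ) (M : Finset (Finset ℕ)) : Prop :=
  (∀ B ∈ M, B.card = k) ∧
  (∀ i < n, ∃ B ∈ M, i ∈ B) ∧
  (∀ B ∈ M, ∀ B' ∈ M, B ≠ B' → Disjoint B B') ∧
  (∀ B ∈ M, ∀ B' ∈ M, B ≠ B' → ∀ a ∈ B, ∀ b ∈ B, ∀ c ∈ B', ∀ d ∈ B',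
    ¬(a < c ∧ c < b ∧ b < d))

noncomputable def Aset (k m c : ℕ) : Finset (Finset (Finset ℕ)) :=
  (((Finset.range (m*k)).powerset).powerset).filter
    (fun M => NCP k (m*k) M ∧ ∀ B ∈ M, ∃ i ∈ B, i < c)

lemma mem_Aset {k m c : ℕ} {M : Finset (Finset ℕ)} :
    M ∈ Aset k m c ↔ (∀ B ∈ M, B ⊆ Finset.range (m*k)) ∧ NCP k (m*k) M ∧
      ∀ B ∈ M, ∃ i ∈ B, i < c := by
  simp only [Aset, Finset.mem_filter, Finset.mem_powerset, and_assoc]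
  constructor
  · rintro ⟨h1, h2, h3⟩
    exact ⟨fun B hB => Finset.mem_powerset.mp (h1 hB), h2, h3⟩
  · rintro ⟨h1, h2, h3⟩
    exact ⟨fun B hB => Finset.mem_powerset.mpr (h1 B hB), h2, h3⟩

lemma Aset_zero (k c : ℕ) (hk : 1 ≤ k) : Aset k 0 c = {∅} := by
  ext M
  simp only [mem_Aset, Finset.mem_singleton]
  constructor
  · rintro ⟨h1, ⟨hc, -, -, -⟩, -⟩
    by_contra hM
    obtain ⟨B, hB⟩ := Finset.nonempty_iff_ne_empty.mpr hM
    have h2 := h1 B hB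
    have h3 := hc B hB
    simp only [Nat.zero_mul, Finset.range_zero, Finset.subset_empty] at h2
    rw [h2] at h3
    simp at h3
    omega
  · rintro rfl
    refine ⟨by simp, ⟨by simp, ?_, by simp, by simp⟩, by simp⟩
    intro i hi
    omega

lemma interval_block {k n : ℕ} {M : Finset (Finset ℕ)} (hk : 1 ≤ k)
    (hsub : ∀ B ∈ M, B ⊆ Finset.range n) (hNCP : NCP k n M)
    {B0 : Finset ℕ} (hB0 : B0 ∈ M) {j : ℕ} (hjB : j ∈ B0) (hjmin : ∀ x ∈ B0, j ≤ x)
    (hmax : ∀ B ∈ M, ∃ x ∈ B, x ≤ j) : B0 = Finset.Ico j (j+k) := by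
  obtain ⟨hcard, hcover, hdisj, hnc⟩ := hNCP
  have claim : ∀ t, t < k → j + t ∈ B0 := by
    intro t
    induction t using Nat.strong_induction_on with
    | _ t ih =>
      intro htk
      rcases Nat.eq_zero_or_pos t with rfl | ht0
      · simpa using hjB
      -- there is an element of B0 that is ≥ j + t
      have hex : ∃ b ∈ B0, j + t ≤ b := by
        by_contra hno
        push_neg at hno
        have hsub' : B0 ⊆ Finset.Ico j (j + t) := by
          intro x hx
          rw [Finset.mem_Ico]
          exact ⟨hjmin x hx, hno x hx⟩
        have := Finset.card_le_card hsub'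
        rw [hcard B0 hB0, Nat.card_Ico] at this
        omega
      set Bf := B0.filter (fun x => j + t ≤ x) with hBf
      have hBfne : Bf.Nonempty := by
        obtain ⟨b, hb1, hb2⟩ := hex
        exact ⟨b, by rw [hBf, Finset.mem_filter]; exact ⟨hb1, hb2⟩⟩
      set b := bmin Bf with hb
      have hbBf : b ∈ Bf := bmin_mem hBfne
      rw [hBf, Finset.mem_filter] at hbBf
      obtain ⟨hbB0, hbge⟩ := hbBf
      by_cases hbeq : b = j + t
      · rw [← hbeq]; exact hbB0
      -- otherwise j + t ∉ B0 and we derive a contradiction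
      exfalso
      have hjtB0 : j + t ∉ B0 := by
        intro hmem
        have : b ≤ j + t := bmin_le (by rw [hBf, Finset.mem_filter]; exact ⟨hmem, le_refl _⟩)
        omega
      have hbgt : j + t < b := by omega
      have hjtn : j + t < n := by
        have := Finset.mem_range.mp (hsub B0 hB0 hbB0)
        omega
      obtain ⟨B', hB', hjtB'⟩ := hcover (j + t) hjtn
      have hne : B' ≠ B0 := fun h => hjtB0 (h ▸ hjtB')
      obtain ⟨x, hxB', hxle⟩ := hmax B' hB'
      have hxj : x < j := by
        rcases Nat.lt_or_ge x j with h | h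
        · exact h
        · exfalso
          have hxeq : x = j := by omega
          subst hxeq
          exact (Finset.disjoint_left.mp (hdisj B' hB' B0 hB0 hne) hxB') hjB
      exact hnc B' hB' B0 hB0 hne x hxB' (j+t) hjtB' j hjB b hbB0 ⟨hxj, by omega, hbgt⟩
  have hsub2 : Finset.Ico j (j+k) ⊆ B0 := by
    intro x hx
    rw [Finset.mem_Ico] at hx
    have := claim (x - j) (by omega)
    rwa [show j + (x - j) = x by omega] at this
  have := Finset.eq_of_subset_of_card_le hsub2 (by
    rw [hcard B0 hB0, Nat.card_Ico]
    omega)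
  exact this.symm

def shr (j k : ℕ) (x : ℕ) : ℕ := if x < j then x else x - k
def expd (j k : ℕ) (x : ℕ) : ℕ := if x < j then x else x + k

lemma expd_strictMono {j k : ℕ} : StrictMono (expd j k) := by
  intro x y hxy
  unfold expd
  split_ifs <;> omega

lemma shr_expd {j k : ℕ} (x : ℕ) : shr j k (expd j k x) = x := by
  unfold shr expd
  split_ifs <;> omega

lemma expd_shr {j k : ℕ} {x : ℕ} (hx : x < j ∨ j + k ≤ x) : expd j k (shr j k x) = x := by
  unfold shr expd
  split_ifs <;> omega

lemma shr_lt_shr {j k : ℕ} {x y : ℕ} (hx : x < j ∨ j + k ≤ x) (hy : y < j ∨ j + k ≤ y) :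
    shr j k x < shr j k y ↔ x < y := by
  unfold shr
  split_ifs <;> omega

lemma expd_not_mem_Ico {j k : ℕ} (x : ℕ) : expd j k x ∉ Finset.Ico j (j+k) := by
  unfold expd
  rw [Finset.mem_Ico]
  split_ifs <;> omega

lemma sup_bmin_facts {k m c : ℕ} (hk : 1 ≤ k) {M : Finset (Finset ℕ)}
    (hM : M ∈ Aset k (m+1) c) :
    Finset.Ico (M.sup bmin) (M.sup bmin + k) ∈ M ∧ M.sup bmin < c ∧ M.sup bmin ≤ m*k ∧
    (∀ B ∈ M, ∃ x ∈ B, x ≤ M.sup bmin) := by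
  rw [mem_Aset] at hM
  obtain ⟨hsub, hNCP, hbelow⟩ := hM
  obtain ⟨hcard, hcover, hdisj, hnc⟩ := hNCP
  have hne : M.Nonempty := by
    obtain ⟨B, hB, -⟩ := hcover 0 (by positivity)
    exact ⟨B, hB⟩
  obtain ⟨B, hB, hBsup⟩ := Finset.exists_mem_eq_sup M hne bmin
  set j := M.sup bmin with hj
  have hBne : B.Nonempty := Finset.card_pos.mp (by rw [hcard B hB]; omega)
  have hjB : j ∈ B := by rw [hBsup]; exact bmin_mem hBne
  have hjmin : ∀ x ∈ B, j ≤ x := by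
    intro x hx
    rw [hBsup]
    exact bmin_le hx
  have hmax : ∀ B' ∈ M, ∃ x ∈ B', x ≤ j := by
    intro B' hB'
    have hB'ne : B'.Nonempty := Finset.card_pos.mp (by rw [hcard B' hB']; omega)
    exact ⟨bmin B', bmin_mem hB'ne, Finset.le_sup hB'⟩
  have hint : B = Finset.Ico j (j+k) :=
    interval_block hk hsub ⟨hcard, hcover, hdisj, hnc⟩ hB hjB hjmin hmax
  refine ⟨hint ▸ hB, ?_, ?_, hmax⟩
  · obtain ⟨i, hiB, hic⟩ := hbelow B hB
    have := hjmin i hiB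
    omega
  · have hmem : j + k - 1 ∈ B := by
      rw [hint, Finset.mem_Ico]
      omega
    have := Finset.mem_range.mp (hsub B hB hmem)
    have hmk : (m+1)*k = m*k + k := by ring
    omega

lemma stepA (k m c : ℕ) (hk : 1 ≤ k) :
    (Aset k (m+1) c).card = ∑ j ∈ Finset.range (min c (m*k+1)), (Aset k m j).card := by
  rw [Finset.card_eq_sum_card_fiberwise (f := fun M => M.sup bmin)
    (t := Finset.range (min c (m*k+1)))
    (fun M hM => by
      obtain ⟨-, h1, h2, -⟩ := sup_bmin_facts hk hM
      simp only [Finset.mem_coe, Finset.mem_range]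
      omega)]
  refine Finset.sum_congr rfl ?_
  intro j hj
  rw [Finset.mem_range] at hj
  have hjc : j < c := lt_of_lt_of_le hj (min_le_left _ _)
  have hjmk : j ≤ m*k := by have := lt_of_lt_of_le hj (min_le_right _ _); omega
  have hmk : (m+1)*k = m*k + k := by ring
  set I := Finset.Ico j (j+k) with hI
  have hjI : j ∈ I := by rw [hI, Finset.mem_Ico]; omega
  have hmemI : ∀ x, x ∈ I ↔ (j ≤ x ∧ x < j + k) := fun x => by rw [hI, Finset.mem_Ico]
  apply Finset.card_nbij'
    (i := fun M => (M.erase I).image (fun B => B.image (shr j k)))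
    (j := fun M' => insert I (M'.image (fun B => B.image (expd j k))))
  · -- forward map lands in Aset k m j
    intro M hM
    simp only [Finset.mem_coe, Finset.mem_filter] at hM
    obtain ⟨hM, hjof⟩ := hM
    obtain ⟨hIM, -, -, hmax⟩ := sup_bmin_facts hk hM
    rw [hjof] at hIM hmax
    rw [mem_Aset] at hM
    obtain ⟨hsub, ⟨hcard, hcover, hdisj, hnc⟩, hbelow⟩ := hM
    -- every other block avoids I
    have hgood : ∀ B ∈ M.erase I, ∀ x ∈ B, x < j ∨ j + k ≤ x := by
      intro B hB x hx
      rw [Finset.mem_erase] at hB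
      have hd := hdisj B hB.2 I hIM hB.1
      by_contra hcon
      push_neg at hcon
      exact (Finset.disjoint_left.mp hd hx) (by rw [hI, Finset.mem_Ico]; omega)
    -- each other block has its min < j
    have hminlt : ∀ B ∈ M.erase I, ∃ x ∈ B, x < j := by
      intro B hB
      rw [Finset.mem_erase] at hB
      obtain ⟨x, hxB, hxle⟩ := hmax B hB.2
      refine ⟨x, hxB, ?_⟩
      rcases hgood B (Finset.mem_erase.mpr hB) x hxB with h | h
      · exact h
      · omega
    rw [Finset.mem_coe, mem_Aset]
    refine ⟨?_, ⟨?_, ?_, ?_, ?_⟩, ?_⟩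
    · -- subset range (m*k)
      intro C hC
      obtain ⟨B, hB, rfl⟩ := Finset.mem_image.mp hC
      intro y hy
      obtain ⟨x, hx, rfl⟩ := Finset.mem_image.mp hy
      have h1 := hgood B hB x hx
      have h2 := Finset.mem_range.mp (hsub B (Finset.mem_of_mem_erase hB) hx)
      rw [Finset.mem_range]
      unfold shr
      split_ifs <;> omega
    · -- card
      intro C hC
      obtain ⟨B, hB, rfl⟩ := Finset.mem_image.mp hC
      rw [Finset.card_image_of_injOn, hcard B (Finset.mem_of_mem_erase hB)]
      intro x hx y hy hxy
      have := congrArg (expd j k) hxy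
      rwa [expd_shr (hgood B hB x hx), expd_shr (hgood B hB y hy)] at this
    · -- cover
      intro i hi
      have hei : expd j k i < (m+1)*k := by
        unfold expd; split_ifs <;> omega
      obtain ⟨B, hB, heiB⟩ := hcover (expd j k i) hei
      have hBI : B ≠ I := by
        rintro rfl
        exact expd_not_mem_Ico i heiB
      refine ⟨B.image (shr j k), Finset.mem_image_of_mem _ (Finset.mem_erase.mpr ⟨hBI, hB⟩), ?_⟩
      have : shr j k (expd j k i) = i := shr_expd i
      rw [← this]
      exact Finset.mem_image_of_mem _ heiB
    · -- disjoint
      intro C hC C' hC' hne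
      obtain ⟨B, hB, rfl⟩ := Finset.mem_image.mp hC
      obtain ⟨B', hB', rfl⟩ := Finset.mem_image.mp hC'
      have hBB' : B ≠ B' := by rintro rfl; exact hne rfl
      rw [Finset.disjoint_left]
      intro y hy hy'
      obtain ⟨x, hx, rfl⟩ := Finset.mem_image.mp hy
      obtain ⟨x', hx', hxx'⟩ := Finset.mem_image.mp hy'
      have : x' = x := by
        have := congrArg (expd j k) hxx'
        rwa [expd_shr (hgood B' hB' x' hx'), expd_shr (hgood B hB x hx)] at this
      subst this
      have hd := hdisj B (Finset.mem_of_mem_erase hB) B' (Finset.mem_of_mem_erase hB') hBB'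
      exact (Finset.disjoint_left.mp hd hx) hx'
    · -- noncrossing
      intro C hC C' hC' hne a ha b hb cc hcc d hd
      obtain ⟨B, hB, rfl⟩ := Finset.mem_image.mp hC
      obtain ⟨B', hB', rfl⟩ := Finset.mem_image.mp hC'
      have hBB' : B ≠ B' := by rintro rfl; exact hne rfl
      obtain ⟨a0, ha0, rfl⟩ := Finset.mem_image.mp ha
      obtain ⟨b0, hb0, rfl⟩ := Finset.mem_image.mp hb
      obtain ⟨c0, hc0, rfl⟩ := Finset.mem_image.mp hcc
      obtain ⟨d0, hd0, rfl⟩ := Finset.mem_image.mp hd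
      rintro ⟨h1, h2, h3⟩
      rw [shr_lt_shr (hgood B hB a0 ha0) (hgood B' hB' c0 hc0)] at h1
      rw [shr_lt_shr (hgood B' hB' c0 hc0) (hgood B hB b0 hb0)] at h2
      rw [shr_lt_shr (hgood B hB b0 hb0) (hgood B' hB' d0 hd0)] at h3
      exact hnc B (Finset.mem_of_mem_erase hB) B' (Finset.mem_of_mem_erase hB') hBB'
        a0 ha0 b0 hb0 c0 hc0 d0 hd0 ⟨h1, h2, h3⟩
    · -- all blocks have an element < j
      intro C hC
      obtain ⟨B, hB, rfl⟩ := Finset.mem_image.mp hC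
      obtain ⟨x, hx, hxlt⟩ := hminlt B hB
      refine ⟨shr j k x, Finset.mem_image_of_mem _ hx, ?_⟩
      unfold shr
      split_ifs <;> omega
  · -- backward map lands in the fiber
    intro M' hM'
    rw [Finset.mem_coe, mem_Aset] at hM'
    obtain ⟨hsub, ⟨hcard, hcover, hdisj, hnc⟩, hbelow⟩ := hM'
    have himg_avoid : ∀ B ∈ M', ∀ y ∈ B.image (expd j k), y ∉ I := by
      intro B hB y hy
      obtain ⟨x, hx, rfl⟩ := Finset.mem_image.mp hy
      rw [hI]
      exact expd_not_mem_Ico x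
    have hInotin : I ∉ M'.image (fun B => B.image (expd j k)) := by
      intro hcon
      obtain ⟨B, hB, hBI⟩ := Finset.mem_image.mp hcon
      obtain ⟨e, heB, helt⟩ := hbelow B hB
      have h1 : expd j k e ∈ I := by rw [← hBI]; exact Finset.mem_image_of_mem _ heB
      exact expd_not_mem_Ico e (hI ▸ h1)
    simp only [Finset.mem_coe, Finset.mem_filter]
    constructor
    · rw [mem_Aset]
      refine ⟨?_, ⟨?_, ?_, ?_, ?_⟩, ?_⟩
      · -- subsets of range
        intro C hC
        rw [Finset.mem_insert] at hC
        rcases hC with rfl | hC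
        · intro x hx
          rw [hI, Finset.mem_Ico] at hx
          rw [Finset.mem_range]
          omega
        · obtain ⟨B, hB, rfl⟩ := Finset.mem_image.mp hC
          intro y hy
          obtain ⟨x, hx, rfl⟩ := Finset.mem_image.mp hy
          have := Finset.mem_range.mp (hsub B hB hx)
          rw [Finset.mem_range]
          unfold expd
          split_ifs <;> omega
      · -- cards
        intro C hC
        rw [Finset.mem_insert] at hC
        rcases hC with rfl | hC
        · rw [hI, Nat.card_Ico]; omega
        · obtain ⟨B, hB, rfl⟩ := Finset.mem_image.mp hC
          rw [Finset.card_image_of_injective B expd_strictMono.injective]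
          exact hcard B hB
      · -- cover
        intro i hi
        by_cases hiI : i ∈ I
        · exact ⟨I, Finset.mem_insert_self _ _, hiI⟩
        · rw [hI, Finset.mem_Ico] at hiI
          push_neg at hiI
          by_cases hij : i < j
          · obtain ⟨B, hB, hiB⟩ := hcover i (by omega)
            refine ⟨B.image (expd j k), Finset.mem_insert_of_mem (Finset.mem_image_of_mem _ hB), ?_⟩
            have : expd j k i = i := by unfold expd; split_ifs <;> omega
            rw [← this]
            exact Finset.mem_image_of_mem _ hiB
          · push_neg at hij
            have hik : j + k ≤ i := hiI hij
            obtain ⟨B, hB, hiB⟩ := hcover (i - k) (by omega)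
            refine ⟨B.image (expd j k), Finset.mem_insert_of_mem (Finset.mem_image_of_mem _ hB), ?_⟩
            have : expd j k (i - k) = i := by unfold expd; split_ifs <;> omega
            rw [← this]
            exact Finset.mem_image_of_mem _ hiB
      · -- disjoint
        intro C hC C' hC' hne
        rw [Finset.mem_insert] at hC hC'
        rcases hC with rfl | hC <;> rcases hC' with rfl | hC'
        · exact absurd rfl hne
        · obtain ⟨B', hB', rfl⟩ := Finset.mem_image.mp hC'
          rw [Finset.disjoint_right]
          intro y hy
          exact himg_avoid B' hB' y hy
        · obtain ⟨B, hB, rfl⟩ := Finset.mem_image.mp hC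
          rw [Finset.disjoint_left]
          intro y hy
          exact himg_avoid B hB y hy
        · obtain ⟨B, hB, rfl⟩ := Finset.mem_image.mp hC
          obtain ⟨B', hB', rfl⟩ := Finset.mem_image.mp hC'
          have hBB' : B ≠ B' := by rintro rfl; exact hne rfl
          rw [Finset.disjoint_left]
          intro y hy hy'
          obtain ⟨x, hx, rfl⟩ := Finset.mem_image.mp hy
          obtain ⟨x', hx', hxx'⟩ := Finset.mem_image.mp hy'
          have : x' = x := expd_strictMono.injective hxx'
          subst this
          exact (Finset.disjoint_left.mp (hdisj B hB B' hB' hBB') hx) hx'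
      · -- noncross
        intro C hC C' hC' hne a ha b hb cc hcc d hd
        rw [Finset.mem_insert] at hC hC'
        rintro ⟨h1, h2, h3⟩
        rcases hC with rfl | hC <;> rcases hC' with rfl | hC'
        · exact hne rfl
        · -- a b ∈ I, cc between a and b must be in I
          obtain ⟨B', hB', rfl⟩ := Finset.mem_image.mp hC'
          rw [hI, Finset.mem_Ico] at ha hb
          have : cc ∈ I := by rw [hI, Finset.mem_Ico]; omega
          exact himg_avoid B' hB' cc hcc this
        · -- cc d ∈ I, b between cc and d must be in I
          obtain ⟨B, hB, rfl⟩ := Finset.mem_image.mp hC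
          rw [hI, Finset.mem_Ico] at hcc hd
          have : b ∈ I := by rw [hI, Finset.mem_Ico]; omega
          exact himg_avoid B hB b hb this
        · obtain ⟨B, hB, rfl⟩ := Finset.mem_image.mp hC
          obtain ⟨B', hB', rfl⟩ := Finset.mem_image.mp hC'
          have hBB' : B ≠ B' := by rintro rfl; exact hne rfl
          obtain ⟨a0, ha0, rfl⟩ := Finset.mem_image.mp ha
          obtain ⟨b0, hb0, rfl⟩ := Finset.mem_image.mp hb
          obtain ⟨c0, hc0, rfl⟩ := Finset.mem_image.mp hcc
          obtain ⟨d0, hd0, rfl⟩ := Finset.mem_image.mp hd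
          rw [expd_strictMono.lt_iff_lt] at h1 h2 h3
          exact hnc B hB B' hB' hBB' a0 ha0 b0 hb0 c0 hc0 d0 hd0 ⟨h1, h2, h3⟩
      · -- min below c
        intro C hC
        rw [Finset.mem_insert] at hC
        rcases hC with rfl | hC
        · exact ⟨j, hjI, hjc⟩
        · obtain ⟨B, hB, rfl⟩ := Finset.mem_image.mp hC
          obtain ⟨e, heB, helt⟩ := hbelow B hB
          refine ⟨expd j k e, Finset.mem_image_of_mem _ heB, ?_⟩
          unfold expd
          split_ifs <;> omega
    · -- sup bmin = j
      apply le_antisymm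
      · apply Finset.sup_le
        intro C hC
        rw [Finset.mem_insert] at hC
        rcases hC with rfl | hC
        · exact bmin_le hjI
        · obtain ⟨B, hB, rfl⟩ := Finset.mem_image.mp hC
          obtain ⟨e, heB, helt⟩ := hbelow B hB
          have he' : expd j k e = e := by unfold expd; split_ifs <;> omega
          have : bmin (B.image (expd j k)) ≤ e := by
            rw [← he']
            exact bmin_le (Finset.mem_image_of_mem _ heB)
          omega
      · have hm : bmin I ∈ I := bmin_mem ⟨j, hjI⟩
        have h1 : j ≤ bmin I := ((hmemI _).mp hm).1
        calc j ≤ bmin I := h1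
          _ ≤ _ := Finset.le_sup (Finset.mem_insert_self _ _)
  · -- left inverse
    intro M hM
    simp only [Finset.mem_coe, Finset.mem_filter] at hM
    obtain ⟨hM, hjof⟩ := hM
    obtain ⟨hIM, -, -, -⟩ := sup_bmin_facts hk hM
    rw [hjof] at hIM
    rw [mem_Aset] at hM
    obtain ⟨hsub, ⟨hcard, hcover, hdisj, hnc⟩, hbelow⟩ := hM
    have hgood : ∀ B ∈ M.erase I, ∀ x ∈ B, x < j ∨ j + k ≤ x := by
      intro B hB x hx
      rw [Finset.mem_erase] at hB
      have hd := hdisj B hB.2 I hIM hB.1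
      by_contra hcon
      push_neg at hcon
      exact (Finset.disjoint_left.mp hd hx) (by rw [hI, Finset.mem_Ico]; omega)
    dsimp only
    rw [Finset.image_image]
    have : (M.erase I).image ((fun B => B.image (expd j k)) ∘ (fun B => B.image (shr j k)))
        = M.erase I := by
      nth_rewrite 2 [← Finset.image_id (s := M.erase I)]
      apply Finset.image_congr
      intro B hB
      show (B.image (shr j k)).image (expd j k) = id B
      rw [Finset.image_image, show (id B : Finset ℕ) = B.image id from by simp]
      apply Finset.image_congr
      intro x hx
      exact expd_shr (hgood B (by simp only [Finset.mem_coe] at hB; exact hB) x (by simpa using hx))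
    rw [this]
    exact Finset.insert_erase hIM
  · -- right inverse
    intro M' hM'
    rw [Finset.mem_coe, mem_Aset] at hM'
    obtain ⟨hsub, ⟨hcard, hcover, hdisj, hnc⟩, hbelow⟩ := hM'
    have hInotin : I ∉ M'.image (fun B => B.image (expd j k)) := by
      intro hcon
      obtain ⟨B, hB, hBI⟩ := Finset.mem_image.mp hcon
      obtain ⟨e, heB, helt⟩ := hbelow B hB
      have h1 : expd j k e ∈ I := by rw [← hBI]; exact Finset.mem_image_of_mem _ heB
      exact expd_not_mem_Ico e (hI ▸ h1)
    dsimp only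
    rw [Finset.erase_insert hInotin, Finset.image_image]
    nth_rewrite 2 [← Finset.image_id (s := M')]
    apply Finset.image_congr
    intro B hB
    show (B.image (expd j k)).image (shr j k) = id B
    rw [Finset.image_image, show (id B : Finset ℕ) = B.image id from by simp]
    apply Finset.image_congr
    intro x hx
    exact shr_expd x




lemma AB (k : ℕ) (hk : 1 ≤ k) : ∀ m c, (Aset k m c).card = (Bset k m c).card := by
  intro m
  induction m with
  | zero =>
    intro c
    rw [Aset_zero k c hk, Bset_zero k c]
    simp
  | succ m ih =>
    intro c
    rw [stepA k m c hk, stepB k m c hk]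
    exact Finset.sum_congr rfl fun j _ => ih j

lemma fin_transfer (m k : ℕ) (hk : 1 ≤ k) :
    (Finset.univ.filter fun M : Finset (Finset (Fin (m * k))) =>
      IsNoncrossingKPartition m k M).card = (Aset k m (m*k)).card := by
  apply Finset.card_nbij'
    (i := fun M => M.image (fun B => B.image Fin.val))
    (j := fun M' => M'.image (fun B => Finset.univ.filter (fun i : Fin (m*k) => (i:ℕ) ∈ B)))
  · intro M hM
    simp only [Finset.mem_coe, Finset.mem_filter, Finset.mem_univ, true_and] at hM
    obtain ⟨hcard, hcover, hdisj, hnc⟩ := hM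
    rw [Finset.mem_coe, mem_Aset]
    refine ⟨?_, ⟨?_, ?_, ?_, ?_⟩, ?_⟩
    · intro C hC
      obtain ⟨B, hB, rfl⟩ := Finset.mem_image.mp hC
      intro y hy
      obtain ⟨x, hx, rfl⟩ := Finset.mem_image.mp hy
      exact Finset.mem_range.mpr x.isLt
    · intro C hC
      obtain ⟨B, hB, rfl⟩ := Finset.mem_image.mp hC
      rw [Finset.card_image_of_injective B Fin.val_injective]
      exact hcard B hB
    · intro i hi
      obtain ⟨B, hB, hiB⟩ := hcover ⟨i, hi⟩
      exact ⟨B.image Fin.val, Finset.mem_image_of_mem _ hB, Finset.mem_image_of_mem _ hiB⟩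
    · intro C hC C' hC' hne
      obtain ⟨B, hB, rfl⟩ := Finset.mem_image.mp hC
      obtain ⟨B', hB', rfl⟩ := Finset.mem_image.mp hC'
      have hBB' : B ≠ B' := by rintro rfl; exact hne rfl
      rw [Finset.disjoint_left]
      intro y hy hy'
      obtain ⟨x, hx, rfl⟩ := Finset.mem_image.mp hy
      obtain ⟨x', hx', hxx'⟩ := Finset.mem_image.mp hy'
      have : x' = x := Fin.val_injective hxx'
      subst this
      exact (Finset.disjoint_left.mp (hdisj B hB B' hB' hBB') hx) hx'
    · intro C hC C' hC' hne a ha b hb cc hcc d hd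
      obtain ⟨B, hB, rfl⟩ := Finset.mem_image.mp hC
      obtain ⟨B', hB', rfl⟩ := Finset.mem_image.mp hC'
      have hBB' : B ≠ B' := by rintro rfl; exact hne rfl
      obtain ⟨a0, ha0, rfl⟩ := Finset.mem_image.mp ha
      obtain ⟨b0, hb0, rfl⟩ := Finset.mem_image.mp hb
      obtain ⟨c0, hc0, rfl⟩ := Finset.mem_image.mp hcc
      obtain ⟨d0, hd0, rfl⟩ := Finset.mem_image.mp hd
      rintro ⟨h1, h2, h3⟩
      exact hnc B hB B' hB' hBB' a0 ha0 b0 hb0 c0 hc0 d0 hd0 ⟨h1, h2, h3⟩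
    · intro C hC
      obtain ⟨B, hB, rfl⟩ := Finset.mem_image.mp hC
      have hBne : B.Nonempty := Finset.card_pos.mp (by rw [hcard B hB]; omega)
      obtain ⟨x, hx⟩ := hBne
      exact ⟨x, Finset.mem_image_of_mem _ hx, x.isLt⟩
  · intro M' hM'
    rw [Finset.mem_coe, mem_Aset] at hM'
    obtain ⟨hsub, ⟨hcard, hcover, hdisj, hnc⟩, hbelow⟩ := hM'
    have hfilt_card : ∀ B ∈ M',
        (Finset.univ.filter (fun i : Fin (m*k) => (i:ℕ) ∈ B)).card = B.card := by
      intro B hB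
      apply Finset.card_nbij (i := Fin.val)
      · intro x hx
        simp only [Finset.mem_coe, Finset.mem_filter, Finset.mem_univ, true_and] at hx
        exact hx
      · intro x hx y hy hxy
        exact Fin.val_injective hxy
      · intro y hy
        rw [Finset.mem_coe] at hy
        have : y < m*k := Finset.mem_range.mp (hsub B hB hy)
        exact ⟨⟨y, this⟩, by simp [hy], rfl⟩
    simp only [Finset.mem_coe, Finset.mem_filter, Finset.mem_univ, true_and]
    refine ⟨?_, ?_, ?_, ?_⟩
    · intro C hC
      obtain ⟨B, hB, rfl⟩ := Finset.mem_image.mp hC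
      rw [hfilt_card B hB]
      exact hcard B hB
    · intro i
      obtain ⟨B, hB, hiB⟩ := hcover (i : ℕ) i.isLt
      refine ⟨_, Finset.mem_image_of_mem _ hB, ?_⟩
      simp [hiB]
    · intro C hC C' hC' hne
      obtain ⟨B, hB, rfl⟩ := Finset.mem_image.mp hC
      obtain ⟨B', hB', rfl⟩ := Finset.mem_image.mp hC'
      have hBB' : B ≠ B' := by rintro rfl; exact hne rfl
      rw [Finset.disjoint_left]
      intro i hi hi'
      simp only [Finset.mem_filter, Finset.mem_univ, true_and] at hi hi'
      exact (Finset.disjoint_left.mp (hdisj B hB B' hB' hBB') hi) hi'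
    · intro C hC C' hC' hne a ha b hb cc hcc d hd
      obtain ⟨B, hB, rfl⟩ := Finset.mem_image.mp hC
      obtain ⟨B', hB', rfl⟩ := Finset.mem_image.mp hC'
      have hBB' : B ≠ B' := by rintro rfl; exact hne rfl
      simp only [Finset.mem_filter, Finset.mem_univ, true_and] at ha hb hcc hd
      rintro ⟨h1, h2, h3⟩
      exact hnc B hB B' hB' hBB' (a:ℕ) ha (b:ℕ) hb (cc:ℕ) hcc (d:ℕ) hd ⟨h1, h2, h3⟩
  · intro M hM
    dsimp only
    rw [Finset.image_image]
    nth_rewrite 2 [← Finset.image_id (s := M)]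
    apply Finset.image_congr
    intro B hB
    show Finset.univ.filter (fun i : Fin (m*k) => (i:ℕ) ∈ B.image Fin.val) = id B
    ext i
    simp only [Finset.mem_filter, Finset.mem_univ, true_and, Finset.mem_image, id_eq]
    constructor
    · rintro ⟨x, hx, hxi⟩
      rwa [Fin.val_injective hxi] at hx
    · intro hi
      exact ⟨i, hi, rfl⟩
  · intro M' hM'
    rw [Finset.mem_coe, mem_Aset] at hM'
    obtain ⟨hsub, -, -⟩ := hM'
    dsimp only
    rw [Finset.image_image]
    nth_rewrite 2 [← Finset.image_id (s := M')]
    apply Finset.image_congr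
    intro B hB
    show (Finset.univ.filter (fun i : Fin (m*k) => (i:ℕ) ∈ B)).image Fin.val = id B
    ext y
    simp only [Finset.mem_image, Finset.mem_filter, Finset.mem_univ, true_and, id_eq]
    constructor
    · rintro ⟨x, hx, rfl⟩
      exact hx
    · intro hy
      have : y < m*k := Finset.mem_range.mp (hsub B (by simpa using hB) hy)
      exact ⟨⟨y, this⟩, hy, rfl⟩


end FussCatalan

open scoped Classical in
theorem stmt_16 (m k : ℕ) (hk : 1 ≤ k) :
    ((Finset.univ.filter fun M : Finset (Finset (Fin (m * k))) =>
      IsNoncrossingKPartition m k M).card : ℚ) =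
      ((m * k + 1).choose m : ℚ) / (m * k + 1) := by
  have h1 := FussCatalan.fin_transfer m k hk
  have h2 := FussCatalan.AB k hk m (m*k)
  have h3 := FussCatalan.Bset_card_mul k m hk
  rw [h1, h2]
  have hne : ((m:ℚ) * k + 1) ≠ 0 := by positivity
  rw [eq_div_iff hne]
  exact_mod_cast h3
end

section
/- Let n be even. The function H(x) = ∑ f_{[a,b]}(x) summed over pairs with b - a odd, where f_{[a,b]}(x) = min(x_{a-2},...,x_{b-3}) - min(x_{a-2},...,x_{b-2}) - min(x_{a-3},...,x_{b-3}) + min(x_{a-3},...,x_{b-2}) (with x₀ := 0), vanishes on the region R₁ = {x : x₀ = x₁, x₂ = x₃, x₄ = x₅, ..., x_{n-4} = x_{n-3}}. [Simplified version: each individual term f_{[a,b]} with b-a odd vanishes on R₁, since either x_{a-3} = x_{a-2} or x_{b-3} = x_{b-2} holds on R₁ by a parity argument.] -/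
/-- Minimum of `x i, x (i+1), ..., x j` (equals `x i` when `j ≤ i`). -/
def rangeMin (x : ℕ → ℝ) (i j : ℕ) : ℝ :=
  (List.range (j + 1 - i)).foldl (fun acc t => min acc (x (i + t))) (x i)

/-- The tropical minor `Δ_{a,b}(x) = min(x_{a-2}, ..., x_{b-3})` for
`2 ≤ a ≤ b-1`, `4 ≤ b ≤ n`, and `0` otherwise. -/
def tropMinor (n : ℕ) (x : ℕ → ℝ) (a b : ℕ) : ℝ :=
  if 2 ≤ a ∧ a + 1 ≤ b ∧ 4 ≤ b ∧ b ≤ n then rangeMin x (a - 2) (b - 3) else 0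

/-- `f_{[a,b]} = Δ_{a,b} - Δ_{a,b+1} - Δ_{a-1,b} + Δ_{a-1,b+1}`. -/
def fint (n : ℕ) (x : ℕ → ℝ) (a b : ℕ) : ℝ :=
  tropMinor n x a b - tropMinor n x a (b + 1) - tropMinor n x (a - 1) b +
    tropMinor n x (a - 1) (b + 1)

lemma foldl_min_le (f : ℕ → ℝ) : ∀ (l : List ℕ) (a : ℝ),
    (l.foldl (fun acc t => min acc (f t)) a) ≤ a := by
  intro l
  induction l with
  | nil => intro a; simp
  | cons h t ih =>
      intro a
      simp only [List.foldl_cons]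
      exact le_trans (ih _) (min_le_left _ _)

lemma rangeMin_self (x : ℕ → ℝ) (i : ℕ) : rangeMin x i i = x i := by
  simp [rangeMin, List.range_succ]

lemma rangeMin_le_left (x : ℕ → ℝ) (i j : ℕ) : rangeMin x i j ≤ x i :=
  foldl_min_le _ _ _

lemma rangeMin_succ (x : ℕ → ℝ) (i j : ℕ) (h : i ≤ j) :
    rangeMin x i (j + 1) = min (rangeMin x i j) (x (j + 1)) := by
  unfold rangeMin
  rw [show j + 1 + 1 - i = (j + 1 - i) + 1 by omega, List.range_succ, List.foldl_append]
  simp only [List.foldl_cons, List.foldl_nil]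
  rw [show i + (j + 1 - i) = j + 1 by omega]

lemma rangeMin_le_right (x : ℕ → ℝ) (i j : ℕ) (h : i ≤ j) : rangeMin x i j ≤ x j := by
  induction j, h using Nat.le_induction with
  | base => rw [rangeMin_self]
  | succ j hj ih => rw [rangeMin_succ x i j hj]; exact min_le_right _ _

lemma rangeMin_cons (x : ℕ → ℝ) (i j : ℕ) (h : i < j) :
    rangeMin x i j = min (x i) (rangeMin x (i + 1) j) := by
  induction j, h using Nat.le_induction with
  | base => rw [rangeMin_succ x i i le_rfl, rangeMin_self, rangeMin_self]
  | succ j hj ih =>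
      rw [rangeMin_succ x i j (by omega), ih, rangeMin_succ x (i + 1) j (by omega),
        min_assoc]

lemma rangeMin_eq_left (x : ℕ → ℝ) (i j : ℕ) (hx : x i = x (i + 1)) (h : i < j) :
    rangeMin x i j = rangeMin x (i + 1) j := by
  rw [rangeMin_cons x i j h, min_eq_right]
  calc rangeMin x (i + 1) j ≤ x (i + 1) := rangeMin_le_left _ _ _
    _ = x i := hx.symm

lemma rangeMin_eq_right (x : ℕ → ℝ) (i j : ℕ) (hx : x j = x (j + 1)) (h : i ≤ j) :
    rangeMin x i (j + 1) = rangeMin x i j := by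
  rw [rangeMin_succ x i j h, min_eq_left]
  calc rangeMin x i j ≤ x j := rangeMin_le_right _ _ _ h
    _ = x (j + 1) := hx

lemma fint_zero (n : ℕ) (hn : Even n) (hn4 : 4 ≤ n) (x : ℕ → ℝ) (hx0 : x 0 = 0)
    (hR : ∀ j : ℕ, 2 * j + 1 ≤ n - 3 → x (2 * j) = x (2 * j + 1))
    (a b : ℕ) (hab : a < b) (hbn : b ≤ n) (hpar : (b - a) % 2 = 1) :
    fint n x a b = 0 := by
  have hne : n % 2 = 0 := Nat.even_iff.mp hn
  have hpair : ∀ m : ℕ, m % 2 = 0 → m + 1 ≤ n - 3 → x m = x (m + 1) := by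
    intro m hm h
    have := hR (m / 2) (by omega)
    rwa [show 2 * (m / 2) = m by omega] at this
  rcases Nat.lt_or_ge a 2 with ha2 | ha2
  · interval_cases a
    · simp [fint]
    · norm_num [fint, tropMinor]
  rcases Nat.even_or_odd a with ha | ha
  · -- a even, b odd
    have hae : a % 2 = 0 := Nat.even_iff.mp ha
    have hbo : b % 2 = 1 := by omega
    by_cases hb3 : b = 3
    · subst hb3
      have ha' : a = 2 := by omega
      subst ha'
      have hx1 : x 1 = 0 := by
        have := hR 0 (by omega)
        simp only [mul_zero, hx0] at this
        exact this.symm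
      have hrm : rangeMin x 0 1 = 0 := by
        rw [rangeMin_succ x 0 0 le_rfl, rangeMin_self, hx0, hx1]
        norm_num
      norm_num [fint, tropMinor, hn4, hrm]
    · have hb5 : 5 ≤ b := by omega
      have hbn' : b + 1 ≤ n := by omega
      have hxb : x (b - 3) = x (b - 3 + 1) := hpair (b - 3) (by omega) (by omega)
      have key : ∀ a' : ℕ, a' < b → tropMinor n x a' (b + 1) = tropMinor n x a' b := by
        intro a' ha'
        unfold tropMinor
        by_cases h2 : 2 ≤ a'
        · rw [if_pos ⟨h2, by omega, by omega, by omega⟩,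
            if_pos ⟨h2, by omega, by omega, by omega⟩,
            show b + 1 - 3 = (b - 3) + 1 by omega]
          exact rangeMin_eq_right x (a' - 2) (b - 3) hxb (by omega)
        · rw [if_neg (by tauto), if_neg (by tauto)]
      rw [fint, key a hab, key (a - 1) (by omega)]
      ring
  · -- a odd, b even
    have hao : a % 2 = 1 := Nat.odd_iff.mp ha
    have ha3 : 3 ≤ a := by omega
    have hxa : x (a - 3) = x (a - 3 + 1) := hpair (a - 3) (by omega) (by omega)
    have key : ∀ c : ℕ, a + 1 ≤ c → tropMinor n x (a - 1) c = tropMinor n x a c := by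
      intro c hc
      unfold tropMinor
      by_cases h4 : 4 ≤ c ∧ c ≤ n
      · rw [if_pos ⟨by omega, by omega, h4.1, h4.2⟩,
          if_pos ⟨ha2, hc, h4.1, h4.2⟩,
          show a - 1 - 2 = a - 3 by omega]
        rw [show a - 2 = (a - 3) + 1 by omega]
        exact rangeMin_eq_left x (a - 3) (c - 3) hxa (by omega)
      · rw [if_neg (by tauto), if_neg (by tauto)]
    rw [fint, key b (by omega), key (b + 1) (by omega)]
    ring

theorem stmt_19 (n : ℕ) (hn : Even n) (hn4 : 4 ≤ n) (x : ℕ → ℝ) (hx0 : x 0 = 0)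
    (hR : ∀ j : ℕ, 2 * j + 1 ≤ n - 3 → x (2 * j) = x (2 * j + 1)) :
    (∀ a b : ℕ, a < b → b ≤ n → (b - a) % 2 = 1 → fint n x a b = 0) ∧
    (∑ a ∈ Finset.range (n + 1), ∑ b ∈ Finset.range (n + 1),
        (if a < b ∧ (b - a) % 2 = 1 then fint n x a b else 0)) = 0 := by
  have h := fint_zero n hn hn4 x hx0 hR
  refine ⟨h, ?_⟩
  apply Finset.sum_eq_zero
  intro a ha
  apply Finset.sum_eq_zero
  intro b hb
  split_ifs with hcond
  · exact h a b hcond.1 (by simpa using Nat.lt_succ_iff.mp (Finset.mem_range.mp hb)) hcond.2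
  · rfl
end
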